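/- arXiv:1507.05585 — 2 statements merged into one kernel-verified Lean document; each statement's English description precedes it below -/
import Mathlib

section
/- Let (x_n) be Fejér monotone with respect to a nonempty closed convex set C in a real Hilbert space. If every weak cluster point of (x_n) belongs to C, then (x_n) converges weakly to the strong limit of the shadow sequence (P_C x_n). -/
/-!
The distances `d n = ‖x n - P (x n)‖` decrease, and the obtuse-angle characterisation of the
projection gives `‖P (x n) - P (x m)‖² ≤ d n² - d m²` for `n ≤ m`, so the shadows form a Cauchy
sequence with a limit `p ∈ C`. A Fejér monotone sequence is bounded, hence every subsequence has a
weakly convergent further subsequence; its limit `w` lies in `C`, and passing to the limit in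
`⟪x n - P (x n), w - P (x n)⟫ ≤ 0` yields `‖w - p‖² ≤ 0`. So every weak cluster point is `p`.
-/

open Filter Topology RealInnerProductSpace

theorem cauchySeq_of_dist_sq_le_sub {α : Type*} [PseudoMetricSpace α] {f : ℕ → α} {a : ℕ → ℝ}
    (ha : Antitone a) (hbdd : BddBelow (Set.range a))
    (h : ∀ n m, n ≤ m → dist (f n) (f m) ^ 2 ≤ a n - a m) : CauchySeq f := by
  obtain ⟨L, haL⟩ : ∃ L, Tendsto a atTop (𝓝 L) := ⟨_, tendsto_atTop_ciInf ha hbdd⟩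
  have hdist : ∀ N n m, N ≤ n → n ≤ m → dist (f n) (f m) ≤ √(a N - L) := fun N n m hNn hnm =>
    Real.le_sqrt_of_sq_le <| (h n m hnm).trans <| by
      linarith [ha hNn, ha.le_of_tendsto haL m]
  refine cauchySeq_of_le_tendsto_0 (fun N => √(a N - L)) (fun n m N hn hm => ?_) ?_
  · rcases le_total n m with hnm | hmn
    · exact hdist N n m hn hnm
    · rw [dist_comm]; exact hdist N m n hm hmn
  · simpa using ((haL.sub_const L).sqrt)

section WeakConvergence

variable {𝕜 E : Type*} [RCLike 𝕜] [NormedAddCommGroup E] [InnerProductSpace 𝕜 E]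

/-- Sequential Banach–Alaoglu, applied in the separable Hilbert space spanned by the sequence. -/
theorem exists_subseq_tendsto_inner_of_bounded [CompleteSpace E] {y : ℕ → E} {M : ℝ}
    (hM : ∀ n, ‖y n‖ ≤ M) :
    ∃ w : E, ∃ φ : ℕ → ℕ, StrictMono φ ∧
      ∀ u : E, Tendsto (fun n => inner 𝕜 (y (φ n)) u) atTop (𝓝 (inner 𝕜 w u)) := by
  set Y := (Submodule.span 𝕜 (Set.range y)).topologicalClosure
  have hyY : ∀ n, y n ∈ Y := fun n =>
    Submodule.le_topologicalClosure _ (Submodule.subset_span ⟨n, rfl⟩)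
  have : TopologicalSpace.SeparableSpace Y :=
    (Set.countable_range y).isSeparable.span.closure.separableSpace
  let f : ℕ → WeakDual 𝕜 Y := fun n =>
    StrongDual.toWeakDual (InnerProductSpace.toDual 𝕜 Y ⟨y n, hyY n⟩)
  have hf : ∀ n, f n ∈ WeakDual.toStrongDual ⁻¹' Metric.closedBall 0 M := fun n => by
    simpa [f] using hM n
  obtain ⟨a, -, φ, hφ, ha⟩ := WeakDual.isSeqCompact_closedBall 𝕜 Y 0 M hf
  refine ⟨(InnerProductSpace.toDual 𝕜 Y).symm (WeakDual.toStrongDual a), φ, hφ, fun u => ?_⟩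
  -- testing against `u` is testing against its projection onto `Y`
  convert (WeakDual.eval_continuous (Y.orthogonalProjectionOnto u)).continuousAt.tendsto.comp ha
    using 1
  · ext n
    simp [f]
  · rw [← Submodule.inner_orthogonalProjectionOnto_eq_of_mem_left,
      InnerProductSpace.toDual_symm_apply]
    rfl

theorem tendsto_inner_of_bounded_of_forall_subseq_eq [CompleteSpace E] {x : ℕ → E} {M : ℝ}
    (hM : ∀ n, ‖x n‖ ≤ M) {p : E}
    (h : ∀ (w : E) (φ : ℕ → ℕ), StrictMono φ →
      (∀ u, Tendsto (fun n => inner 𝕜 (x (φ n)) u) atTop (𝓝 (inner 𝕜 w u))) → w = p)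
    (u : E) : Tendsto (fun n => inner 𝕜 (x n) u) atTop (𝓝 (inner 𝕜 p u)) := by
  refine tendsto_of_subseq_tendsto fun ns hns => ?_
  obtain ⟨ψ, -, hnsψ⟩ := strictMono_subseq_of_tendsto_atTop hns
  obtain ⟨w, φ, hφ, hw⟩ := exists_subseq_tendsto_inner_of_bounded (𝕜 := 𝕜) (y := x ∘ ns ∘ ψ)
    fun n => hM _
  exact ⟨ψ ∘ φ, h w _ (hnsψ.comp hφ) hw ▸ hw u⟩

theorem tendsto_inner_of_bounded_of_tendsto {ι : Type*} {l : Filter ι} {y z : ι → E} {w p : E}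
    {M : ℝ} (hM : ∀ i, ‖y i‖ ≤ M)
    (hy : ∀ u, Tendsto (fun i => inner 𝕜 (y i) u) l (𝓝 (inner 𝕜 w u))) (hz : Tendsto z l (𝓝 p)) :
    Tendsto (fun i => inner 𝕜 (y i) (z i)) l (𝓝 (inner 𝕜 w p)) := by
  have hsmall : Tendsto (fun i => inner 𝕜 (y i) (z i - p)) l (𝓝 0) := by
    refine squeeze_zero_norm (fun i => ?_) (by simpa using ((hz.sub_const p).norm.const_mul M))
    exact (norm_inner_le_norm _ _).trans (mul_le_mul_of_nonneg_right (hM i) (norm_nonneg _))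
  simpa [inner_sub_right] using hsmall.add (hy p)

end WeakConvergence

theorem eq_of_tendsto_inner_of_real_inner_sub_sub_nonpos {X ι : Type*} [NormedAddCommGroup X]
    [InnerProductSpace ℝ X] {l : Filter ι} [l.NeBot] {y z : ι → X} {w p : X} {M : ℝ}
    (hM : ∀ i, ‖y i‖ ≤ M)
    (hy : ∀ u, Tendsto (fun i => ⟪y i, u⟫) l (𝓝 ⟪w, u⟫)) (hz : Tendsto z l (𝓝 p))
    (hangle : ∀ i, ⟪y i - z i, w - z i⟫ ≤ 0) : w = p := by
  have hw_sub : Tendsto (fun i => w - z i) l (𝓝 (w - p)) := tendsto_const_nhds.sub hz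
  have hlim : Tendsto (fun i => ⟪y i - z i, w - z i⟫) l (𝓝 ⟪w - p, w - p⟫) := by
    simpa only [inner_sub_left] using
      (tendsto_inner_of_bounded_of_tendsto hM hy hw_sub).sub (hz.inner hw_sub)
  have hnonpos : ⟪w - p, w - p⟫ ≤ 0 := le_of_tendsto hlim (Eventually.of_forall hangle)
  exact sub_eq_zero.mp (real_inner_self_nonpos.mp hnonpos)

def IsMetricProjection {X : Type*} [NormedAddCommGroup X] (C : Set X) (P : X → X) : Prop :=
  ∀ z, P z ∈ C ∧ ∀ c ∈ C, ‖z - P z‖ ≤ ‖z - c‖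

def IsFejerMonotone {X : Type*} [NormedAddCommGroup X] (C : Set X) (x : ℕ → X) : Prop :=
  ∀ c ∈ C, ∀ n : ℕ, ‖x (n + 1) - c‖ ≤ ‖x n - c‖

theorem IsMetricProjection.real_inner_sub_sub_nonpos {X : Type*} [NormedAddCommGroup X]
    [InnerProductSpace ℝ X] {C : Set X} {P : X → X} (hP : IsMetricProjection C P)
    (hC : Convex ℝ C) (z : X) {c : X} (hc : c ∈ C) :
    ⟪z - P z, c - P z⟫ ≤ 0 := by
  have : Nonempty C := ⟨⟨P z, (hP z).1⟩⟩
  have hbdd : BddBelow (Set.range fun c : C => ‖z - c‖) :=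
    ⟨0, by rintro _ ⟨c, rfl⟩; exact norm_nonneg _⟩
  exact (norm_eq_iInf_iff_real_inner_le_zero hC (hP z).1).mp
    (le_antisymm (le_ciInf fun c => (hP z).2 c c.2) (ciInf_le hbdd ⟨P z, (hP z).1⟩)) c hc

namespace IsFejerMonotone

variable {X : Type*} [NormedAddCommGroup X] {C : Set X} {x : ℕ → X} {P : X → X}

theorem antitone_norm_sub (hx : IsFejerMonotone C x) {c : X} (hc : c ∈ C) :
    Antitone fun n => ‖x n - c‖ :=
  antitone_nat_of_succ_le (hx c hc)

theorem norm_le (hx : IsFejerMonotone C x) {c : X} (hc : c ∈ C) (n : ℕ) :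
    ‖x n‖ ≤ ‖x 0 - c‖ + ‖c‖ :=
  calc ‖x n‖ = ‖(x n - c) + c‖ := by rw [sub_add_cancel]
    _ ≤ ‖x n - c‖ + ‖c‖ := norm_add_le _ _
    _ ≤ ‖x 0 - c‖ + ‖c‖ := by gcongr; exact hx.antitone_norm_sub hc (Nat.zero_le n)

theorem antitone_norm_sub_proj (hx : IsFejerMonotone C x) (hP : IsMetricProjection C P) :
    Antitone fun n => ‖x n - P (x n)‖ :=
  antitone_nat_of_succ_le fun n =>
    ((hP (x (n + 1))).2 _ (hP (x n)).1).trans (hx _ (hP (x n)).1 n)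

variable [InnerProductSpace ℝ X]

theorem norm_proj_sub_proj_sq_le (hx : IsFejerMonotone C x) (hP : IsMetricProjection C P)
    (hC : Convex ℝ C) {n m : ℕ} (hnm : n ≤ m) :
    ‖P (x n) - P (x m)‖ ^ 2 ≤ ‖x n - P (x n)‖ ^ 2 - ‖x m - P (x m)‖ ^ 2 := by
  have hfar : ‖x m - P (x n)‖ ≤ ‖x n - P (x n)‖ := hx.antitone_norm_sub (hP (x n)).1 hnm
  have hangle : ⟪x m - P (x m), P (x n) - P (x m)⟫ ≤ 0 :=
    hP.real_inner_sub_sub_nonpos hC (x m) (hP (x n)).1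
  have hexpand : ‖x m - P (x n)‖ ^ 2 = ‖x m - P (x m)‖ ^ 2
      - 2 * ⟪x m - P (x m), P (x n) - P (x m)⟫ + ‖P (x n) - P (x m)‖ ^ 2 := by
    rw [show x m - P (x n) = (x m - P (x m)) - (P (x n) - P (x m)) by abel, norm_sub_sq_real]
  nlinarith [norm_nonneg (x m - P (x n))]

theorem cauchySeq_proj (hx : IsFejerMonotone C x) (hP : IsMetricProjection C P)
    (hC : Convex ℝ C) : CauchySeq fun n => P (x n) := by
  refine cauchySeq_of_dist_sq_le_sub (a := fun n => ‖x n - P (x n)‖ ^ 2) ?_ ⟨0, ?_⟩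
    fun n m hnm => by simpa only [dist_eq_norm] using hx.norm_proj_sub_proj_sq_le hP hC hnm
  · exact fun n m hnm => pow_le_pow_left₀ (norm_nonneg _) (hx.antitone_norm_sub_proj hP hnm) 2
  · rintro _ ⟨n, rfl⟩
    positivity

end IsFejerMonotone

theorem fejer_weak_cluster_in_C_weak_conv_general {X : Type*} [NormedAddCommGroup X]
    [InnerProductSpace ℝ X] [CompleteSpace X]
    (C : Set X) (hCcl : IsClosed C) (hCcv : Convex ℝ C)
    (P : X → X) (hP : ∀ z : X, P z ∈ C ∧ ∀ c ∈ C, ‖z - P z‖ ≤ ‖z - c‖)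
    (x : ℕ → X) (hFej : ∀ c ∈ C, ∀ n : ℕ, ‖x (n + 1) - c‖ ≤ ‖x n - c‖)
    (hcluster : ∀ w : X, (∃ φ : ℕ → ℕ, StrictMono φ ∧
        ∀ u : X, Tendsto (fun n => ⟪x (φ n), u⟫) atTop (𝓝 ⟪w, u⟫)) → w ∈ C) :
    ∃ p ∈ C, Tendsto (fun n => P (x n)) atTop (𝓝 p) ∧
      ∀ u : X, Tendsto (fun n => ⟪x n, u⟫) atTop (𝓝 ⟪p, u⟫) := by
  have hx : IsFejerMonotone C x := hFej
  have hbdd := hx.norm_le (hP (x 0)).1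
  obtain ⟨p, hp⟩ := cauchySeq_tendsto_of_complete (hx.cauchySeq_proj hP hCcv)
  have hpC : p ∈ C := hCcl.mem_of_tendsto hp (Eventually.of_forall fun n => (hP (x n)).1)
  refine ⟨p, hpC, hp, tendsto_inner_of_bounded_of_forall_subseq_eq hbdd fun w φ hφ hw => ?_⟩
  have hwC : w ∈ C := hcluster w ⟨φ, hφ, hw⟩
  exact eq_of_tendsto_inner_of_real_inner_sub_sub_nonpos (fun n => hbdd _) hw
    (hp.comp hφ.tendsto_atTop) fun n =>
      IsMetricProjection.real_inner_sub_sub_nonpos hP hCcv _ hwC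

theorem fejer_weak_cluster_in_C_weak_conv {X : Type*} [NormedAddCommGroup X]
    [InnerProductSpace ℝ X] [CompleteSpace X]
    (C : Set X) (hCne : C.Nonempty) (hCcl : IsClosed C) (hCcv : Convex ℝ C)
    (P : X → X) (hP : ∀ z : X, P z ∈ C ∧ ∀ c ∈ C, ‖z - P z‖ ≤ ‖z - c‖)
    (x : ℕ → X) (hFej : ∀ c ∈ C, ∀ n : ℕ, ‖x (n + 1) - c‖ ≤ ‖x n - c‖)
    (hcluster : ∀ w : X, (∃ φ : ℕ → ℕ, StrictMono φ ∧
        ∀ u : X, Tendsto (fun n => ⟪x (φ n), u⟫) atTop (𝓝 ⟪w, u⟫)) → w ∈ C) :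
    ∃ p ∈ C, Tendsto (fun n => P (x n)) atTop (𝓝 p) ∧
      ∀ u : X, Tendsto (fun n => ⟪x n, u⟫) atTop (𝓝 ⟪p, u⟫) :=
  fejer_weak_cluster_in_C_weak_conv_general C hCcl hCcv P hP x hFej hcluster
end

section
/- (Ostrowski) Let (x_n) be a bounded sequence in a finite-dimensional real normed space such that x_n − x_{n+1} → 0. Then the set of cluster points of (x_n) is nonempty, compact, and connected. -/
/-! Subsequential limits are the cluster points of the sequence; these form a closed subset of a
compact ball, and they are nonempty by compactness. If the cluster set split into two disjoint
closed pieces, these would have disjoint open `δ`-neighbourhoods `U` and `V`. The sequence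
eventually lies in `U ∪ V`, and once its steps are shorter than `δ / 2` it cannot pass from `U`
to `V`; having returned to `U` infinitely often it then stays in `U`, so it cannot accumulate in
`V`. -/

open Filter Topology Metric Set

theorem Nat.eventually_atTop_of_frequently_of_eventually_imp_succ {p : ℕ → Prop}
    (hfreq : ∃ᶠ n in atTop, p n) (hstep : ∀ᶠ n in atTop, p n → p (n + 1)) :
    ∀ᶠ n in atTop, p n := by
  obtain ⟨N, hN⟩ := eventually_atTop.1 hstep
  obtain ⟨m, hmN, hm⟩ := frequently_atTop.1 hfreq N
  refine eventually_atTop.2 ⟨m, fun n hmn => ?_⟩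
  induction n, hmn using Nat.le_induction with
  | base => exact hm
  | succ n hmn ih => exact hN n (hmN.trans hmn) ih

section ClusterSet

variable {X ι : Type*} [TopologicalSpace X] {f : Filter ι} {u : ι → X} {K : Set X}

theorem exists_strictMono_tendsto_comp_iff_mapClusterPt [FirstCountableTopology X]
    {x : ℕ → X} {p : X} :
    (∃ φ : ℕ → ℕ, StrictMono φ ∧ Tendsto (x ∘ φ) atTop (𝓝 p)) ↔ MapClusterPt p atTop x :=
  ⟨fun ⟨_, hφ, hlim⟩ => hlim.mapClusterPt.of_comp hφ.tendsto_atTop,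
    MapClusterPt.tendsto_subseq⟩

theorem IsCompact.isCompact_setOf_mapClusterPt [R1Space X] (hK : IsCompact K)
    (huK : ∀ᶠ i in f, u i ∈ K) : IsCompact {p | MapClusterPt p f u} :=
  hK.closure.of_isClosed_subset isClosed_setOfPred_clusterPt fun _ hp =>
    isClosed_closure.mem_of_mapClusterPt hp (huK.mono fun _ hi => subset_closure hi)

theorem IsCompact.eventually_mem_of_setOf_mapClusterPt_subset {U : Set X} (hK : IsCompact K)
    (huK : ∀ᶠ i in f, u i ∈ K) (hU : IsOpen U) (hsub : {p | MapClusterPt p f u} ⊆ U) :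
    ∀ᶠ i in f, u i ∈ U := by
  by_contra h
  have hfreq : ∃ᶠ i in f, u i ∈ K \ U :=
    (not_eventually.1 h).and_eventually huK |>.mono fun _ hi => ⟨hi.2, hi.1⟩
  obtain ⟨p, hpKU, hp⟩ := (hK.diff hU).exists_mapClusterPt_of_frequently hfreq
  exact hpKU.2 (hsub hp)

end ClusterSet

theorem IsCompact.isPreconnected_setOf_mapClusterPt {X : Type*} [PseudoMetricSpace X]
    {x : ℕ → X} {K : Set X} (hK : IsCompact K) (hxK : ∀ᶠ n in atTop, x n ∈ K)
    (hstep : Tendsto (fun n => dist (x n) (x (n + 1))) atTop (𝓝 0)) :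
    IsPreconnected {p | MapClusterPt p atTop x} := by
  set C := {p | MapClusterPt p atTop x}
  have hC : IsCompact C := hK.isCompact_setOf_mapClusterPt hxK
  refine isPreconnected_closed_iff.2 fun A B hA hB hCAB ⟨a, haC, haA⟩ ⟨b, hbC, hbB⟩ => ?_
  by_contra hdisj
  have hdisj' : Disjoint (C ∩ A) (C ∩ B) :=
    Set.disjoint_left.2 fun p ⟨hpC, hpA⟩ ⟨_, hpB⟩ => hdisj ⟨p, hpC, hpA, hpB⟩
  obtain ⟨δ, hδ, hAB⟩ :=
    hdisj'.exists_thickenings (hC.inter_right hA) (isClosed_setOfPred_clusterPt.inter hB)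
  set U := thickening (δ / 2) (C ∩ A)
  set V := thickening (δ / 2) (C ∩ B)
  have hUV : Disjoint U V :=
    hAB.mono (thickening_mono (by linarith) _) (thickening_mono (by linarith) _)
  have hCUV : C ⊆ U ∪ V := fun p hp =>
    (hCAB hp).imp (fun h => self_subset_thickening (half_pos hδ) _ ⟨hp, h⟩)
      (fun h => self_subset_thickening (half_pos hδ) _ ⟨hp, h⟩)
  have hxUV : ∀ᶠ n in atTop, x n ∈ U ∪ V :=
    hK.eventually_mem_of_setOf_mapClusterPt_subset hxK (isOpen_thickening.union isOpen_thickening)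
      hCUV
  -- a step shorter than `δ / 2` from `U` lands in `thickening δ (C ∩ A)`, which misses `V`
  have hstay : ∀ᶠ n in atTop, x n ∈ U → x (n + 1) ∈ U := by
    filter_upwards [(tendsto_add_atTop_nat 1).eventually hxUV,
      hstep.eventually (gt_mem_nhds (half_pos hδ))] with n hn1 hn hxn
    refine hn1.resolve_right fun hV => hAB.ne_of_mem ?_ (thickening_mono (by linarith) _ hV) rfl
    obtain ⟨z, hz, hxz⟩ := mem_thickening_iff.1 hxn
    refine mem_thickening_iff.2 ⟨z, hz, ?_⟩
    calc dist (x (n + 1)) z ≤ dist (x n) (x (n + 1)) + dist (x n) z := dist_triangle_left _ _ _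
      _ < δ / 2 + δ / 2 := add_lt_add hn hxz
      _ = δ := add_halves δ
  have hU : ∀ᶠ n in atTop, x n ∈ U :=
    Nat.eventually_atTop_of_frequently_of_eventually_imp_succ (haC.frequently <|
      isOpen_thickening.mem_nhds (self_subset_thickening (half_pos hδ) _ ⟨haC, haA⟩)) hstay
  have hV : ∃ᶠ n in atTop, x n ∈ V := hbC.frequently <|
    isOpen_thickening.mem_nhds (self_subset_thickening (half_pos hδ) _ ⟨hbC, hbB⟩)
  obtain ⟨n, hnV, hnU⟩ := (hV.and_eventually hU).exists
  exact hUV.ne_of_mem hnU hnV rfl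

theorem ostrowski {X : Type*} [NormedAddCommGroup X] [NormedSpace ℝ X]
    [FiniteDimensional ℝ X]
    (x : ℕ → X) (hbd : ∃ M : ℝ, ∀ n, ‖x n‖ ≤ M)
    (hreg : Tendsto (fun n => x n - x (n + 1)) atTop (𝓝 0)) :
    let S := {p : X | ∃ φ : ℕ → ℕ, StrictMono φ ∧ Tendsto (x ∘ φ) atTop (𝓝 p)}
    S.Nonempty ∧ IsCompact S ∧ IsConnected S := by
  intro S
  obtain ⟨M, hM⟩ := hbd
  have hK : IsCompact (closedBall (0 : X) M) := isCompact_closedBall 0 M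
  have hxK : ∀ᶠ n in atTop, x n ∈ closedBall (0 : X) M :=
    Eventually.of_forall fun n => mem_closedBall_zero_iff.2 (hM n)
  have hstep : Tendsto (fun n => dist (x n) (x (n + 1))) atTop (𝓝 0) := by
    simpa only [dist_eq_norm, norm_zero] using hreg.norm
  have hS : S = {p | MapClusterPt p atTop x} :=
    Set.ext fun _ => exists_strictMono_tendsto_comp_iff_mapClusterPt
  obtain ⟨p, -, hp⟩ := hK.exists_mapClusterPt (tendsto_principal.2 hxK)
  rw [hS]
  exact ⟨⟨p, hp⟩, hK.isCompact_setOf_mapClusterPt hxK,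
    ⟨p, hp⟩, hK.isPreconnected_setOf_mapClusterPt hxK hstep⟩
end
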